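/- arXiv:2402.02025 — 3 statements merged into one kernel-verified Lean document; each statement's English description precedes it below -/
import Mathlib

section
/- Let H be a positive integer, γ ∈ (0,1], ξ ∈ ℝ, and c : ℕ → ℝ with c(h) ≥ 0 for all h. Define η(0) = ξ and η(h+1) = γ⁻¹ · (η(h) − c(h)). Then ∑_{h=0}^{H} γ^h c(h) ≤ ξ if and only if c(h) ≤ η(h) for all h ∈ {0,...,H}. -/
/-! Multiplying the recursion by `γ ^ (h + 1)` shows that `γ ^ h * η h` is `ξ` minus the discounted
cost spent before step `h`. Hence, for `γ > 0`, the instantaneous constraint `c h ≤ η h` says exactly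
that the cumulative cost up to step `h` stays within `ξ`. Since costs are nonnegative these partial
sums increase with `h`, so all of them stay within `ξ` iff the last one does. -/

open Finset

theorem pow_mul_eq_sub_sum_range {K : Type*} [Field K] {γ ξ : K} (hγ : γ ≠ 0) {c η : ℕ → K}
    (hη0 : η 0 = ξ) (hηrec : ∀ h, η (h + 1) = γ⁻¹ * (η h - c h)) (h : ℕ) :
    γ ^ h * η h = ξ - ∑ i ∈ range h, γ ^ i * c i := by
  induction h with
  | zero => simp [hη0]
  | succ n ih =>
    rw [hηrec, sum_range_succ, ← sub_sub, ← ih]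
    field_simp
    ring

theorem le_iff_sum_range_succ_le {K : Type*} [Field K] [LinearOrder K] [IsStrictOrderedRing K]
    {γ ξ : K} (hγ : 0 < γ) {c η : ℕ → K}
    (hη0 : η 0 = ξ) (hηrec : ∀ h, η (h + 1) = γ⁻¹ * (η h - c h)) (h : ℕ) :
    c h ≤ η h ↔ ∑ i ∈ range (h + 1), γ ^ i * c i ≤ ξ := by
  rw [← mul_le_mul_iff_right₀ (pow_pos hγ h), pow_mul_eq_sub_sum_range hγ.ne' hη0 hηrec,
    sum_range_succ, le_sub_iff_add_le']

theorem cumulative_iff_instantaneous_general (H : ℕ) (γ ξ : ℝ) (hγ0 : 0 < γ)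
    (c : ℕ → ℝ) (hc : ∀ h, 0 ≤ c h)
    (η : ℕ → ℝ) (hη0 : η 0 = ξ)
    (hηrec : ∀ h, η (h + 1) = γ⁻¹ * (η h - c h)) :
    (∑ h ∈ Finset.range (H + 1), γ ^ h * c h ≤ ξ) ↔ ∀ h ≤ H, c h ≤ η h := by
  simp only [le_iff_sum_range_succ_le hγ0 hη0 hηrec]
  refine ⟨fun hsum h hh => le_trans ?_ hsum, fun hall => hall H le_rfl⟩
  exact sum_le_sum_of_subset_of_nonneg (range_mono (by omega))
    fun i _ _ => mul_nonneg (pow_nonneg hγ0.le i) (hc i)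

theorem cumulative_iff_instantaneous (H : ℕ) (hH : 0 < H) (γ ξ : ℝ) (hγ0 : 0 < γ) (hγ1 : γ ≤ 1)
    (c : ℕ → ℝ) (hc : ∀ h, 0 ≤ c h)
    (η : ℕ → ℝ) (hη0 : η 0 = ξ)
    (hηrec : ∀ h, η (h + 1) = γ⁻¹ * (η h - c h)) :
    (∑ h ∈ Finset.range (H + 1), γ ^ h * c h ≤ ξ) ↔ ∀ h ≤ H, c h ≤ η h :=
  cumulative_iff_instantaneous_general H γ ξ hγ0 c hc η hη0 hηrec
end

section
/- Let Ω be a probability space, H a positive integer, and X_0, ..., X_H real-valued random variables with X_h ∈ [0,1] almost surely. Let γ ∈ (0,1], ξ ∈ ℝ, and define η(0) = ξ, η(h+1) = γ⁻¹·(η(h) − X_h) (a random sequence). Then P(∑_{h=0}^{H} γ^h X_h ≤ ξ) = 1 if and only if P(X_h ≤ η(h)) = 1 for all h ∈ {0,...,H}. -/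
/-!
Unrolling the recursion gives `γ ^ h * η h = ξ - ∑_{k < h} γ ^ k X_k`, so `X_h ≤ η h` says exactly
that the discounted cost accumulated up to step `h` is at most `ξ`. Since the costs are nonnegative,
these partial sums increase with `h`, so along every path the bound on the full sum is equivalent to
the bounds at all steps `h ≤ H`. Finitely many almost-sure events hold simultaneously almost surely.
-/

open MeasureTheory

section Pathwise

variable {K : Type*} {γ ξ : K} {x η : ℕ → K}

theorem pow_mul_eq_sub_sum_of_rec [Field K] (hγ : γ ≠ 0) (hη0 : η 0 = ξ)
    (hηrec : ∀ h, η (h + 1) = γ⁻¹ * (η h - x h)) (h : ℕ) :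
    γ ^ h * η h = ξ - ∑ k ∈ Finset.range h, γ ^ k * x k := by
  induction h with
  | zero => simp [hη0]
  | succ n ih =>
    rw [hηrec, Finset.sum_range_succ, pow_succ, mul_assoc, mul_inv_cancel_left₀ hγ, mul_sub, ih]
    ring

variable [Field K] [LinearOrder K] [IsStrictOrderedRing K]

theorem le_rec_iff_sum_range_succ_le (hγ : 0 < γ) (hη0 : η 0 = ξ)
    (hηrec : ∀ h, η (h + 1) = γ⁻¹ * (η h - x h)) (h : ℕ) :
    x h ≤ η h ↔ ∑ k ∈ Finset.range (h + 1), γ ^ k * x k ≤ ξ := by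
  rw [← mul_le_mul_iff_right₀ (pow_pos hγ h), pow_mul_eq_sub_sum_of_rec hγ.ne' hη0 hηrec,
    Finset.sum_range_succ]
  constructor <;> intro _ <;> linarith

theorem sum_range_succ_le_iff_forall_le_rec (hγ : 0 < γ) (hη0 : η 0 = ξ)
    (hηrec : ∀ h, η (h + 1) = γ⁻¹ * (η h - x h)) (hx : ∀ k, 0 ≤ x k) (H : ℕ) :
    ∑ k ∈ Finset.range (H + 1), γ ^ k * x k ≤ ξ ↔ ∀ h ≤ H, x h ≤ η h := by
  refine ⟨fun hsum h hh ↦ ?_,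
    fun hle ↦ (le_rec_iff_sum_range_succ_le hγ hη0 hηrec H).1 (hle H le_rfl)⟩
  rw [le_rec_iff_sum_range_succ_le hγ hη0 hηrec]
  refine le_trans (Finset.sum_le_sum_of_subset_of_nonneg ?_ fun k _ _ ↦ ?_) hsum
  · exact Finset.range_subset_range.2 (Nat.succ_le_succ hh)
  · exact mul_nonneg (pow_pos hγ k).le (hx k)

end Pathwise

theorem measurable_of_rec {Ω : Type*} [MeasurableSpace Ω] {X η : ℕ → Ω → ℝ} {γ ξ : ℝ}
    (hX : ∀ h, Measurable (X h)) (hη0 : ∀ ω, η 0 ω = ξ)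
    (hηrec : ∀ h ω, η (h + 1) ω = γ⁻¹ * (η h ω - X h ω)) (h : ℕ) : Measurable (η h) := by
  induction h with
  | zero => simp [funext hη0]
  | succ n ih => simpa [funext (hηrec n)] using (ih.sub (hX n)).const_mul γ⁻¹

theorem measure_setOf_eq_one_iff_ae {Ω : Type*} [MeasurableSpace Ω] {μ : Measure Ω}
    [IsProbabilityMeasure μ] {p : Ω → Prop} (hp : MeasurableSet {ω | p ω}) :
    μ {ω | p ω} = 1 ↔ ∀ᵐ ω ∂μ, p ω := by
  rw [ae_iff_measure_eq hp.nullMeasurableSet, measure_univ]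

theorem as_cumulative_iff_as_instantaneous_general {Ω : Type*} [MeasurableSpace Ω] (μ : Measure Ω)
    [IsProbabilityMeasure μ] (H : ℕ)
    (X : ℕ → Ω → ℝ) (hXmeas : ∀ h, Measurable (X h))
    (hX : ∀ h, ∀ᵐ ω ∂μ, 0 ≤ X h ω ∧ X h ω ≤ 1)
    (γ ξ : ℝ) (hγ0 : 0 < γ)
    (η : ℕ → Ω → ℝ) (hη0 : ∀ ω, η 0 ω = ξ)
    (hηrec : ∀ h ω, η (h + 1) ω = γ⁻¹ * (η h ω - X h ω)) :
    μ {ω | ∑ h ∈ Finset.range (H + 1), γ ^ h * X h ω ≤ ξ} = 1 ↔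
      ∀ h ≤ H, μ {ω | X h ω ≤ η h ω} = 1 := by
  have hηmeas := measurable_of_rec hXmeas hη0 hηrec
  have hXnonneg : ∀ᵐ ω ∂μ, ∀ k, 0 ≤ X k ω :=
    ae_all_iff.2 fun k ↦ (hX k).mono fun _ hω ↦ hω.1
  rw [measure_setOf_eq_one_iff_ae (measurableSet_le (Finset.measurable_sum _
    fun k _ ↦ (hXmeas k).const_mul _) measurable_const)]
  calc (∀ᵐ ω ∂μ, ∑ h ∈ Finset.range (H + 1), γ ^ h * X h ω ≤ ξ)
      ↔ ∀ᵐ ω ∂μ, ∀ h ∈ Set.Iic H, X h ω ≤ η h ω := by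
        refine Filter.eventually_congr (hXnonneg.mono fun ω hω ↦ ?_)
        exact sum_range_succ_le_iff_forall_le_rec hγ0 (hη0 ω) (hηrec · ω) hω H
    _ ↔ ∀ h ≤ H, ∀ᵐ ω ∂μ, X h ω ≤ η h ω := Filter.eventually_all_finite (Set.finite_Iic H)
    _ ↔ ∀ h ≤ H, μ {ω | X h ω ≤ η h ω} = 1 := by
        simp only [measure_setOf_eq_one_iff_ae (measurableSet_le (hXmeas _) (hηmeas _))]

theorem as_cumulative_iff_as_instantaneous {Ω : Type*} [MeasurableSpace Ω] (μ : Measure Ω)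
    [IsProbabilityMeasure μ] (H : ℕ) (hH : 0 < H)
    (X : ℕ → Ω → ℝ) (hXmeas : ∀ h, Measurable (X h))
    (hX : ∀ h, ∀ᵐ ω ∂μ, 0 ≤ X h ω ∧ X h ω ≤ 1)
    (γ ξ : ℝ) (hγ0 : 0 < γ) (hγ1 : γ ≤ 1)
    (η : ℕ → Ω → ℝ) (hη0 : ∀ ω, η 0 ω = ξ)
    (hηrec : ∀ h ω, η (h + 1) ω = γ⁻¹ * (η h ω - X h ω)) :
    μ {ω | ∑ h ∈ Finset.range (H + 1), γ ^ h * X h ω ≤ ξ} = 1 ↔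
      ∀ h ≤ H, μ {ω | X h ω ≤ η h ω} = 1 :=
  as_cumulative_iff_as_instantaneous_general μ H X hXmeas hX γ ξ hγ0 η hη0 hηrec
end

section
/- Let Ω be a probability space, H a positive integer, γ ∈ (0,1], ξ ∈ ℝ, and X_0,...,X_H integrable random variables with X_h ≥ 0 a.s. Define the random sequence η(0) = ξ, η(h+1) = γ⁻¹·(η(h) − X_h). If ∑_{h=0}^{H} γ^h E[X_h] ≤ ξ fails, then there exists h ∈ {0,...,H} such that E[X_h] > E[η(h)], and conversely if ∑_{h=0}^{H} γ^h E[X_h] ≤ ξ then E[X_h] ≤ E[η(h)] for all h ∈ {0,...,H}. -/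
/-! By linearity the means `e h = E[η h]` obey the same recursion `e (h+1) = γ⁻¹ (e h - E[X h])`,
which unrolls to `γ ^ h * e h = ξ - ∑_{i<h} γ ^ i E[X i]`. Hence `E[X h] ≤ e h` says exactly that
the discounted partial sum up to `h` is at most `ξ`, and these partial sums increase with `h`
because `X ≥ 0`. -/

open MeasureTheory Finset

section Recursion

variable {γ : ℝ} {e x : ℕ → ℝ}

theorem pow_mul_eq_sub_sum_of_succ_eq (hγ : γ ≠ 0) (hrec : ∀ h, e (h + 1) = γ⁻¹ * (e h - x h))
    (h : ℕ) : γ ^ h * e h = e 0 - ∑ i ∈ range h, γ ^ i * x i := by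
  induction h with
  | zero => simp
  | succ n ih =>
    rw [sum_range_succ, hrec, pow_succ, mul_assoc, mul_inv_cancel_left₀ hγ]
    linarith

theorem le_iff_sum_range_succ_le_of_succ_eq (hγ : 0 < γ)
    (hrec : ∀ h, e (h + 1) = γ⁻¹ * (e h - x h)) (h : ℕ) :
    x h ≤ e h ↔ ∑ i ∈ range (h + 1), γ ^ i * x i ≤ e 0 := by
  rw [← mul_le_mul_iff_right₀ (pow_pos hγ h), pow_mul_eq_sub_sum_of_succ_eq hγ.ne' hrec,
    sum_range_succ]
  constructor <;> intro _ <;> linarith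

theorem sum_range_le_iff_forall_le_of_succ_eq (hγ : 0 < γ) (hx : ∀ h, 0 ≤ x h)
    (hrec : ∀ h, e (h + 1) = γ⁻¹ * (e h - x h)) (H : ℕ) :
    ∑ i ∈ range (H + 1), γ ^ i * x i ≤ e 0 ↔ ∀ h ≤ H, x h ≤ e h := by
  refine ⟨fun hsum h hh => ?_, fun hle => ?_⟩
  · rw [le_iff_sum_range_succ_le_of_succ_eq hγ hrec]
    refine le_trans (sum_le_sum_of_subset_of_nonneg (range_subset_range.mpr (by omega))
      fun i _ _ => ?_) hsum
    exact mul_nonneg (pow_pos hγ i).le (hx i)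
  · exact (le_iff_sum_range_succ_le_of_succ_eq hγ hrec H).mp (hle H le_rfl)

end Recursion

section Integral

variable {Ω : Type*} [MeasurableSpace Ω] {μ : Measure Ω} {γ : ℝ} {X η : ℕ → Ω → ℝ}

theorem integrable_of_succ_eq (hXint : ∀ h, Integrable (X h) μ) (hη0 : Integrable (η 0) μ)
    (hηrec : ∀ h ω, η (h + 1) ω = γ⁻¹ * (η h ω - X h ω)) (h : ℕ) : Integrable (η h) μ := by
  induction h with
  | zero => exact hη0
  | succ n ih =>
    rw [show η (n + 1) = fun ω => γ⁻¹ * (η n ω - X n ω) from funext (hηrec n)]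
    exact (ih.sub (hXint n)).const_mul γ⁻¹

theorem integral_succ_eq_of_succ_eq (hXint : ∀ h, Integrable (X h) μ)
    (hη0 : Integrable (η 0) μ) (hηrec : ∀ h ω, η (h + 1) ω = γ⁻¹ * (η h ω - X h ω)) (h : ℕ) :
    ∫ ω, η (h + 1) ω ∂μ = γ⁻¹ * (∫ ω, η h ω ∂μ - ∫ ω, X h ω ∂μ) := by
  simp_rw [hηrec]
  rw [integral_const_mul, integral_sub (integrable_of_succ_eq hXint hη0 hηrec h) (hXint h)]

end Integral

theorem expected_cumulative_iff_expected_instantaneous_general {Ω : Type*} [MeasurableSpace Ω]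
    (μ : Measure Ω) [IsProbabilityMeasure μ] (H : ℕ)
    (γ ξ : ℝ) (hγ0 : 0 < γ)
    (X : ℕ → Ω → ℝ) (hXint : ∀ h, Integrable (X h) μ)
    (hX : ∀ h, ∀ᵐ ω ∂μ, 0 ≤ X h ω)
    (η : ℕ → Ω → ℝ) (hη0 : ∀ ω, η 0 ω = ξ)
    (hηrec : ∀ h ω, η (h + 1) ω = γ⁻¹ * (η h ω - X h ω)) :
    (¬ (∑ h ∈ Finset.range (H + 1), γ ^ h * ∫ ω, X h ω ∂μ) ≤ ξ →
        ∃ h ≤ H, (∫ ω, X h ω ∂μ) > ∫ ω, η h ω ∂μ) ∧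
    ((∑ h ∈ Finset.range (H + 1), γ ^ h * ∫ ω, X h ω ∂μ) ≤ ξ →
        ∀ h ≤ H, (∫ ω, X h ω ∂μ) ≤ ∫ ω, η h ω ∂μ) := by
  have hη0_eq : η 0 = fun _ => ξ := funext hη0
  have hη0_int : Integrable (η 0) μ := hη0_eq ▸ integrable_const ξ
  have hη0_integral : ∫ ω, η 0 ω ∂μ = ξ := by simp [hη0_eq]
  have key := sum_range_le_iff_forall_le_of_succ_eq (e := fun h => ∫ ω, η h ω ∂μ) hγ0
    (fun h => integral_nonneg_of_ae (hX h)) (integral_succ_eq_of_succ_eq hXint hη0_int hηrec) H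
  rw [hη0_integral] at key
  refine ⟨fun hnot => ?_, key.mp⟩
  by_contra! hall
  exact hnot (key.mpr hall)

theorem expected_cumulative_iff_expected_instantaneous {Ω : Type*} [MeasurableSpace Ω]
    (μ : Measure Ω) [IsProbabilityMeasure μ] (H : ℕ) (hH : 0 < H)
    (γ ξ : ℝ) (hγ0 : 0 < γ) (hγ1 : γ ≤ 1)
    (X : ℕ → Ω → ℝ) (hXint : ∀ h, Integrable (X h) μ)
    (hX : ∀ h, ∀ᵐ ω ∂μ, 0 ≤ X h ω)
    (η : ℕ → Ω → ℝ) (hη0 : ∀ ω, η 0 ω = ξ)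
    (hηrec : ∀ h ω, η (h + 1) ω = γ⁻¹ * (η h ω - X h ω)) :
    (¬ (∑ h ∈ Finset.range (H + 1), γ ^ h * ∫ ω, X h ω ∂μ) ≤ ξ →
        ∃ h ≤ H, (∫ ω, X h ω ∂μ) > ∫ ω, η h ω ∂μ) ∧
    ((∑ h ∈ Finset.range (H + 1), γ ^ h * ∫ ω, X h ω ∂μ) ≤ ξ →
        ∀ h ≤ H, (∫ ω, X h ω ∂μ) ≤ ∫ ω, η h ω ∂μ) :=
  expected_cumulative_iff_expected_instantaneous_general μ H γ ξ hγ0 X hXint hX η hη0 hηrec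
end
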